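/- arXiv:2308.14827 — 3 statements merged into one kernel-verified Lean document; each statement's English description precedes it below -/
import Mathlib

section
/- For every nonzero real number η, R(−1/2 + iη) = −1/2 + iη′ where η′ = η/2 − 9/(8η); in particular, the vertical line Re y = −1/2 is invariant under R. -/
open Complex

/-- The exact RG map of the 3-state Potts model on the one-dimensional
(`b = 1`) hierarchical lattice. -/
noncomputable def pottsR (y : ℂ) : ℂ := (y ^ 2 + 2) / (2 * y + 1)

/-- For nonzero real `η`, `R(-1/2 + iη) = -1/2 + iη'` with
`η' = η/2 - 9/(8η)`: the vertical line `Re y = -1/2` is invariant under `R`. -/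
theorem stmt_2 (η : ℝ) (hη : η ≠ 0) :
    pottsR (-(1/2) + η * I) = -(1/2) + (η / 2 - 9 / (8 * η) : ℝ) * I := by
  have hη' : (η : ℂ) ≠ 0 := by exact_mod_cast hη
  have hden : 2 * (-(1/2 : ℂ) + η * I) + 1 ≠ 0 := by
    have : 2 * (-(1/2 : ℂ) + η * I) + 1 = 2 * η * I := by ring
    rw [this]
    simp [hη', I_ne_zero]
  rw [pottsR, div_eq_iff hden]
  push_cast
  field_simp
  ring_nf
  simp [I_sq]
end

section
/- Let ω = e^{2πi/3}. Then R(ω) = ω̄ and R(ω̄) = ω, so {ω, ω̄} is a periodic cycle of R of period 2. Moreover R′(ω) = 2 and R′(ω̄) = 2, so the multiplier of the cycle is R′(ω)·R′(ω̄) = 4, and each of ω, ω̄ is a repelling fixed point of R∘R with (R∘R)′(ω) = 4. -/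
/-!
Both `ω` and `ω̄ = -1 - ω` are the roots of `y ^ 2 + y + 1`. Modulo this polynomial
`y ^ 2 + 2 ≡ (-1 - y) * (2 * y + 1)` and `(2 * y + 1) ^ 2 ≡ -3`, so `R` swaps the two roots and
`R' y = 2 * (y ^ 2 + y - 2) / (2 * y + 1) ^ 2 = -6 / -3 = 2` at each of them; the chain rule
gives `(R ∘ R)' = 2 * 2`.
-/

open Complex

lemma IsPrimitiveRoot.sq_add_self_add_one {R : Type*} [CommRing R] [IsDomain R] {ζ : R}
    (hζ : IsPrimitiveRoot ζ 3) : ζ ^ 2 + ζ + 1 = 0 := by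
  have h := hζ.geom_sum_eq_zero (by norm_num)
  simp only [Finset.sum_range_succ, Finset.sum_range_zero] at h
  linear_combination h

lemma IsPrimitiveRoot.conj_eq_neg_sub_one {ζ : ℂ} (hζ : IsPrimitiveRoot ζ 3) :
    starRingEnd ℂ ζ = -ζ - 1 := by
  rw [← inv_eq_conj (hζ.norm'_eq_one (by norm_num)), inv_eq_of_mul_eq_one_right]
  linear_combination -hζ.sq_add_self_add_one

lemma isPrimitiveRoot_exp_two_pi_I_div_three : IsPrimitiveRoot (exp (2 * Real.pi * I / 3)) 3 := by
  exact_mod_cast isPrimitiveRoot_exp 3 (by norm_num)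

section CubeRoots

variable {ζ : ℂ}

lemma two_mul_add_one_ne_zero_of_sq_add_self_add_one (hζ : ζ ^ 2 + ζ + 1 = 0) :
    2 * ζ + 1 ≠ 0 := by
  intro h
  have : (2 * ζ + 1) ^ 2 = -3 := by linear_combination 4 * hζ
  simp [h] at this

lemma neg_sub_one_sq_add_self_add_one (hζ : ζ ^ 2 + ζ + 1 = 0) :
    (-ζ - 1) ^ 2 + (-ζ - 1) + 1 = 0 := by
  linear_combination hζ

end CubeRoots

lemma hasDerivAt_pottsR {a : ℂ} (ha : 2 * a + 1 ≠ 0) :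
    HasDerivAt pottsR (2 * (a ^ 2 + a - 2) / (2 * a + 1) ^ 2) a := by
  have hnum : HasDerivAt (fun y : ℂ => y ^ 2 + 2) (2 * a) a := by
    simpa using (hasDerivAt_pow 2 a).add_const 2
  have hden : HasDerivAt (fun y : ℂ => 2 * y + 1) 2 a := by
    simpa using ((hasDerivAt_id a).const_mul 2).add_const 1
  exact (hnum.div hden ha).congr_deriv (by ring)

section Cycle

variable {ζ : ℂ} (hζ : ζ ^ 2 + ζ + 1 = 0)
include hζ

lemma pottsR_of_sq_add_self_add_one : pottsR ζ = -ζ - 1 := by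
  rw [pottsR, div_eq_iff (two_mul_add_one_ne_zero_of_sq_add_self_add_one hζ)]
  linear_combination 3 * hζ

lemma pottsR_pottsR_of_sq_add_self_add_one : pottsR (pottsR ζ) = ζ := by
  rw [pottsR_of_sq_add_self_add_one hζ,
    pottsR_of_sq_add_self_add_one (neg_sub_one_sq_add_self_add_one hζ)]
  ring

lemma hasDerivAt_pottsR_of_sq_add_self_add_one : HasDerivAt pottsR 2 ζ := by
  have hne := two_mul_add_one_ne_zero_of_sq_add_self_add_one hζ
  refine (hasDerivAt_pottsR hne).congr_deriv ?_
  rw [div_eq_iff (pow_ne_zero 2 hne)]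
  linear_combination -6 * hζ

lemma hasDerivAt_pottsR_comp_pottsR_of_sq_add_self_add_one :
    HasDerivAt (pottsR ∘ pottsR) 4 ζ := by
  have hR : HasDerivAt pottsR 2 (pottsR ζ) := by
    rw [pottsR_of_sq_add_self_add_one hζ]
    exact hasDerivAt_pottsR_of_sq_add_self_add_one (neg_sub_one_sq_add_self_add_one hζ)
  exact (hR.comp ζ (hasDerivAt_pottsR_of_sq_add_self_add_one hζ)).congr_deriv (by norm_num)

end Cycle

/-- `{ω, ω̄}` with `ω = e^{2πi/3}` is a repelling period-2 cycle of `R`,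
with multiplier `R'(ω)·R'(ω̄) = 4`. -/
theorem stmt_3 :
    let ω : ℂ := Complex.exp (2 * Real.pi * I / 3)
    pottsR ω = (starRingEnd ℂ) ω ∧
    pottsR ((starRingEnd ℂ) ω) = ω ∧
    deriv pottsR ω = 2 ∧
    deriv pottsR ((starRingEnd ℂ) ω) = 2 ∧
    deriv pottsR ω * deriv pottsR ((starRingEnd ℂ) ω) = 4 ∧
    pottsR (pottsR ω) = ω ∧
    pottsR (pottsR ((starRingEnd ℂ) ω)) = (starRingEnd ℂ) ω ∧
    deriv (pottsR ∘ pottsR) ω = 4 ∧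
    deriv (pottsR ∘ pottsR) ((starRingEnd ℂ) ω) = 4 := by
  intro ω
  have hω : ω ^ 2 + ω + 1 = 0 := isPrimitiveRoot_exp_two_pi_I_div_three.sq_add_self_add_one
  have hconj : starRingEnd ℂ ω = -ω - 1 :=
    isPrimitiveRoot_exp_two_pi_I_div_three.conj_eq_neg_sub_one
  have hω' : starRingEnd ℂ ω ^ 2 + starRingEnd ℂ ω + 1 = 0 :=
    hconj ▸ neg_sub_one_sq_add_self_add_one hω
  have hd := (hasDerivAt_pottsR_of_sq_add_self_add_one hω).deriv
  have hd' := (hasDerivAt_pottsR_of_sq_add_self_add_one hω').deriv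
  refine ⟨?_, ?_, hd, hd', by rw [hd, hd']; norm_num,
    pottsR_pottsR_of_sq_add_self_add_one hω, pottsR_pottsR_of_sq_add_self_add_one hω',
    (hasDerivAt_pottsR_comp_pottsR_of_sq_add_self_add_one hω).deriv,
    (hasDerivAt_pottsR_comp_pottsR_of_sq_add_self_add_one hω').deriv⟩
  · rw [pottsR_of_sq_add_self_add_one hω, hconj]
  · rw [pottsR_of_sq_add_self_add_one hω', hconj]
    ring
end

section
/- For every integer B ≥ 1 and every real t, the Loschmidt rate function per bond of the open 3-state Potts chain of B bonds, f_B(t) = −(1/B)·ln(|3(e^{it} + 2)^B| / 3^{B+1}), is independent of B and equals f(t) = −(1/2)·ln((5 + 4cos t)/9); moreover, since 5 + 4cos t ≥ 1 > 0 for all t, this function is infinitely differentiable on ℝ. In particular, the open chain exhibits no dynamical quantum phase transition. -/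
open Complex

lemma aux_pos (t : ℝ) : (1:ℝ) ≤ 5 + 4 * Real.cos t := by
  nlinarith [Real.neg_one_le_cos t]

lemma aux_abs (t : ℝ) :
    ‖Complex.exp (t * I) + 2‖ = Real.sqrt (5 + 4 * Real.cos t) := by
  rw [Complex.norm_def, Complex.normSq_apply]
  have h1 : (Complex.exp (t * I) + 2).re = Real.cos t + 2 := by
    simp [Complex.exp_re]
  have h2 : (Complex.exp (t * I) + 2).im = Real.sin t := by
    simp [Complex.exp_im]
  rw [h1, h2]
  congr 1
  nlinarith [Real.sin_sq_add_cos_sq t]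

/-- The Loschmidt rate function per bond of the open 3-state Potts chain of `B`
bonds, `f_B(t) = −(1/B)·ln(|3(e^{it}+2)^B|/3^{B+1})`, is independent of `B` and
equals `−(1/2)·ln((5+4cos t)/9)`, an infinitely differentiable function of `t`
(since `5 + 4cos t ≥ 1 > 0`): the open chain has no DQPT. -/
theorem stmt_12 :
    (∀ B : ℕ, 1 ≤ B → ∀ t : ℝ,
      -(1 / (B : ℝ)) *
          Real.log (‖3 * (Complex.exp (t * I) + 2) ^ B‖ / 3 ^ (B + 1)) =
        -(1 / 2) * Real.log ((5 + 4 * Real.cos t) / 9)) ∧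
    (∀ t : ℝ, 1 ≤ 5 + 4 * Real.cos t) ∧
    ContDiff ℝ (⊤ : ℕ∞) (fun t : ℝ => -(1 / 2) * Real.log ((5 + 4 * Real.cos t) / 9)) := by
  refine ⟨?_, aux_pos, ?_⟩
  · intro B hB t
    have hpos : (0:ℝ) < 5 + 4 * Real.cos t := lt_of_lt_of_le one_pos (aux_pos t)
    have hs : (0:ℝ) < Real.sqrt (5 + 4 * Real.cos t) := Real.sqrt_pos.mpr hpos
    have habs : ‖3 * (Complex.exp (t * I) + 2) ^ B‖
        = 3 * Real.sqrt (5 + 4 * Real.cos t) ^ B := by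
      rw [norm_mul, norm_pow, aux_abs]
      norm_num
    rw [habs]
    have hB' : (0:ℝ) < (B:ℝ) := by exact_mod_cast hB
    have key : Real.log (3 * Real.sqrt (5 + 4 * Real.cos t) ^ B / 3 ^ (B + 1))
        = (B:ℝ) * (Real.log (Real.sqrt (5 + 4 * Real.cos t)) - Real.log 3) := by
      rw [Real.log_div (by positivity) (by positivity), Real.log_mul (by norm_num)
        (by positivity), Real.log_pow, Real.log_pow]
      push_cast
      ring
    rw [key, Real.log_sqrt hpos.le, Real.log_div (by positivity) (by norm_num)]
    have h9 : Real.log 9 = 2 * Real.log 3 := by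
      rw [show (9:ℝ) = 3 ^ 2 by norm_num, Real.log_pow]; push_cast; ring
    rw [h9]
    field_simp
  · have h : ContDiff ℝ (⊤ : ℕ∞) (fun t : ℝ => (5 + 4 * Real.cos t) / 9) := by
      exact ((contDiff_const.add (contDiff_const.mul Real.contDiff_cos))).div_const 9
    exact contDiff_const.mul (h.log (fun t => by have := aux_pos t; positivity))
end
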